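/- The Type (B.1) metric with q = c = 0 is Ricci flat and its only non-zero Weyl curvature component (up to symmetries) is W₁₂₁₂ = −3b. In particular it is flat if and only if b = 0, and for b ≠ 0 all Jacobi operators J(x) = R(·,x)x are two-step nilpotent (so the metric is Osserman with all eigenvalues of every Jacobi operator equal to zero). -/

import Mathlib

open Real Matrix

noncomputable section

abbrev Pt : Type := Fin 4 → ℝ
abbrev Mtx : Type := Matrix (Fin 4) (Fin 4) ℝ

/-- Partial derivative in the `i`-th coordinate direction. -/
def pd (i : Fin 4) (f : Pt → ℝ) (x : Pt) : ℝ :=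
  fderiv ℝ f x (Pi.single i 1)

/-- Inverse of the metric matrix. -/
def ginv (g : Pt → Mtx) (x : Pt) : Mtx := (g x)⁻¹

/-- Christoffel symbols Γ^k_{ij} of the Levi-Civita connection. -/
def chris (g : Pt → Mtx) (x : Pt) (k i j : Fin 4) : ℝ :=
  (1/2) * ∑ l, ginv g x k l *
    (pd i (fun y => g y l j) x + pd j (fun y => g y l i) x - pd l (fun y => g y i j) x)

/-- Component `l` of the curvature operator R(∂_i,∂_j)∂_k (convention
R(X,Y) = ∇_{[X,Y]} - [∇_X,∇_Y]). -/
def Rup (g : Pt → Mtx) (x : Pt) (l i j k : Fin 4) : ℝ :=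
  pd j (fun y => chris g y l i k) x - pd i (fun y => chris g y l j k) x
    + ∑ m, chris g x m i k * chris g x l j m
    - ∑ m, chris g x m j k * chris g x l i m

/-- The (0,4) curvature tensor R(∂_i,∂_j,∂_k,∂_l) = g(R(∂_i,∂_j)∂_k, ∂_l). -/
def Riem (g : Pt → Mtx) (x : Pt) (i j k l : Fin 4) : ℝ :=
  ∑ m, g x l m * Rup g x m i j k

/-- Ricci tensor ρ(X,Y) = trace (Z ↦ R(X,Z)Y). -/
def ricci (g : Pt → Mtx) (x : Pt) (i j : Fin 4) : ℝ :=
  ∑ k, Rup g x k i k j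

/-- Scalar curvature. -/
def scal (g : Pt → Mtx) (x : Pt) : ℝ :=
  ∑ i, ∑ j, ginv g x i j * ricci g x i j

/-- The Ricci operator g^{-1}ρ. -/
def RicOp (g : Pt → Mtx) (x : Pt) : Mtx :=
  Matrix.of fun i j => ∑ k, ginv g x i k * ricci g x k j

/-- Schouten tensor 𝔖 = ρ - (τ/6) g (dimension 4). -/
def schouten (g : Pt → Mtx) (x : Pt) (i j : Fin 4) : ℝ :=
  ricci g x i j - scal g x / 6 * g x i j

/-- Covariant derivative of the Schouten tensor, (∇_i 𝔖)_{jk}. -/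
def covSchouten (g : Pt → Mtx) (x : Pt) (i j k : Fin 4) : ℝ :=
  pd i (fun y => schouten g y j k) x
    - ∑ m, chris g x m i j * schouten g x m k
    - ∑ m, chris g x m i k * schouten g x j m

/-- Cotton tensor 𝔠_{ijk} = (∇_i 𝔖)_{jk} - (∇_j 𝔖)_{ik}. -/
def cotton (g : Pt → Mtx) (x : Pt) (i j k : Fin 4) : ℝ :=
  covSchouten g x i j k - covSchouten g x j i k

/-- Weyl conformal curvature tensor (dimension 4). -/
def weyl (g : Pt → Mtx) (x : Pt) (i j k l : Fin 4) : ℝ :=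
  Riem g x i j k l
    - (1/2) * (g x i k * ricci g x j l - g x i l * ricci g x j k
        + g x j l * ricci g x i k - g x j k * ricci g x i l)
    + scal g x / 6 * (g x i k * g x j l - g x i l * g x j k)

/-- Covariant derivative of the Cotton tensor, (∇_α 𝔠)_{kij}. -/
def covCotton (g : Pt → Mtx) (x : Pt) (α k i j : Fin 4) : ℝ :=
  pd α (fun y => cotton g y k i j) x
    - ∑ m, chris g x m α k * cotton g x m i j
    - ∑ m, chris g x m α i * cotton g x k m j
    - ∑ m, chris g x m α j * cotton g x k i m

/-- Bach tensor B_{ij} = (1/2){ g^{kα}(∇_α 𝔠)_{kij} + ρ^{kℓ} W_{ikjℓ} }. -/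
def bach (g : Pt → Mtx) (x : Pt) (i j : Fin 4) : ℝ :=
  (1/2) * ((∑ k, ∑ α, ginv g x k α * covCotton g x α k i j)
    + ∑ k, ∑ l, (∑ p, ∑ r, ginv g x k p * ginv g x l r * ricci g x p r) * weyl g x i k j l)

/-- Hessian of a function with respect to the Levi-Civita connection. -/
def hess (g : Pt → Mtx) (φ : Pt → ℝ) (x : Pt) (i j : Fin 4) : ℝ :=
  pd i (fun y => pd j φ y) x - ∑ m, chris g x m i j * pd m φ x

/-- Laplacian (metric trace of the Hessian). -/
def lap (g : Pt → Mtx) (φ : Pt → ℝ) (x : Pt) : ℝ :=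
  ∑ i, ∑ j, ginv g x i j * hess g φ x i j

/-- The conformal metric ḡ = φ^{-2} g. -/
def conf (φ : Pt → ℝ) (g : Pt → Mtx) : Pt → Mtx :=
  fun y => ((φ y)^2)⁻¹ • g y

/-- Einstein at a point: ρ = (τ/4) g. -/
def IsEinsteinAt (g : Pt → Mtx) (x : Pt) : Prop :=
  ∀ i j, ricci g x i j = scal g x / 4 * g x i j

/-- The conformally Einstein equation 2 Hes_φ + φ ρ = (1/4)(2Δφ + φτ) g. -/
def ConfEinsteinEq (g : Pt → Mtx) (φ : Pt → ℝ) : Prop :=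
  ∀ (x : Pt) (i j : Fin 4),
    2 * hess g φ x i j + φ x * ricci g x i j
      = (1/4) * (2 * lap g φ x + φ x * scal g x) * g x i j

/-- Jacobi operator J(v) = R(·,v)v as a matrix. -/
def jacobi (g : Pt → Mtx) (x : Pt) (v : Fin 4 → ℝ) : Mtx :=
  Matrix.of fun l i => ∑ j, ∑ k, v j * v k * Rup g x l i j k

/-- Type (A.1) metric. Coordinates: `x 0 = x₁, …, x 3 = x₄`. -/
def gA1 (a b c q : ℝ) : Pt → Mtx := fun x =>
  !![4*b*(x 1)^2 + a, 2*b*(x 1), -(4*a*(x 1)*(x 3) - 4*c*(x 1) + a)/2, 2*a*(x 1);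
     2*b*(x 1), b, -(a*(x 3) - c), a;
     -(4*a*(x 1)*(x 3) - 4*c*(x 1) + a)/2, -(a*(x 3) - c), q, 0;
     2*a*(x 1), a, 0, 0]

/-- Type (A.2) metric. -/
def gA2 (a b c q α : ℝ) : Pt → Mtx := fun x =>
  !![0, 0, -a * Real.exp (2*α*(x 3)), 0;
     0, a * Real.exp (2*α*(x 3)), 0, 0;
     -a * Real.exp (2*α*(x 3)), 0, b * Real.exp (2*(α-1)*(x 3)), c * Real.exp ((α-1)*(x 3));
     0, 0, c * Real.exp ((α-1)*(x 3)), q]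

/-- Type (A.3) metric `g₊`. -/
def gA3p (a b c q : ℝ) : Pt → Mtx := fun x =>
  !![0, 0, 0, a * Real.exp (2*(x 2));
     0, a * Real.exp (2*(x 2)) * Real.cos (x 3)^2, 0, 0;
     0, 0, b, c;
     a * Real.exp (2*(x 2)), 0, c, q]

/-- Type (A.3) metric `g₋`. -/
def gA3m (a b c q : ℝ) : Pt → Mtx := fun x =>
  !![0, 0, 0, a * Real.exp (2*(x 2));
     0, a * Real.exp (2*(x 2)) * Real.cosh (x 3)^2, 0, 0;
     0, 0, b, c;
     a * Real.exp (2*(x 2)), 0, c, q]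

/-- Type (A.4) metric. -/
def gA4 (a b : ℝ) : Pt → Mtx := fun x =>
  !![a/2*(x 3)^2 + 4*b*(x 1)^2 + a, 2*b*(x 1), a*(x 1)*(4 + (x 3)^2)/2, a*(1 + 2*(x 1)*(x 2))*(x 3)/2;
     2*b*(x 1), b, a*(4 + (x 3)^2)/4, a*(x 2)*(x 3)/2;
     a*(x 1)*(4 + (x 3)^2)/2, a*(4 + (x 3)^2)/4, 0, 0;
     a*(1 + 2*(x 1)*(x 2))*(x 3)/2, a*(x 2)*(x 3)/2, 0, a/2]

/-- Type (A.5) metric. -/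
def gA5 (a : ℝ) : Pt → Mtx := fun x =>
  !![0, -a*(x 3)/(8*(x 1)), 0, a/8;
     -a*(x 3)/(8*(x 1)), a*(2 + 2*(x 0)*(x 3) + (x 2)^2)/(8*(x 1)^2), -a*(x 2)/(8*(x 1)), -a*(x 0)/(8*(x 1));
     0, -a*(x 2)/(8*(x 1)), a/8, 0;
     a/8, -a*(x 0)/(8*(x 1)), 0, 0]

/-- Type (B.1) metric. -/
def gB1 (a b c q : ℝ) : Pt → Mtx := fun x =>
  !![q*((x 2)^2 + 4*(x 1)*(x 2)*(x 3) + 4*(x 1)^2*(x 3)^2) + 4*c*(x 1)*(x 2) + 8*c*(x 1)^2*(x 3) + 2*a*(x 2) + 4*b*(x 1)^2,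
       q*((x 2)*(x 3) + 2*(x 1)*(x 3)^2) + 4*c*(x 1)*(x 3) + c*(x 2) + 2*b*(x 1),
       q*((x 2) + 2*(x 1)*(x 3)) + 2*c*(x 1) + a, 2*a*(x 1);
     q*((x 2)*(x 3) + 2*(x 1)*(x 3)^2) + 4*c*(x 1)*(x 3) + c*(x 2) + 2*b*(x 1),
       q*(x 3)^2 + 2*c*(x 3) + b, q*(x 3) + c, a;
     q*((x 2) + 2*(x 1)*(x 3)) + 2*c*(x 1) + a, q*(x 3) + c, q, 0;
     2*a*(x 1), a, 0, 0]

/-- Type (B.3) metric. -/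
def gB3 (a b : ℝ) : Pt → Mtx := fun x =>
  !![0, -a * Real.exp (-(x 1)) * (x 2), a * Real.exp (-(x 1)), 0;
     -a * Real.exp (-(x 1)) * (x 2), 2*(2*b*(x 2)^2 - a*(x 3)), -2*b*(x 2), a;
     a * Real.exp (-(x 1)), -2*b*(x 2), b, 0;
     0, a, 0, 0]


/-!
With `q = c = 0` the metric is polynomial in `x₂, x₃` with an explicit inverse, so the
Christoffel symbols are computed directly. The only non-vanishing curvature operator is
`R(∂₁,∂₂) = -R(∂₂,∂₁)`, sending `∂₁ ↦ (3b/a)(2x₂∂₃ - ∂₄)`, `∂₂ ↦ (3b/a)∂₃` and killing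
`∂₃, ∂₄`. Its image lies in `span{∂₃,∂₄}`, on which `dx₁ ∧ dx₂` vanishes, so the Ricci
contraction is zero and `W = R = -3b (dx₁ ∧ dx₂) ⊗ (dx₁ ∧ dx₂)`. Every Jacobi operator has rank
at most one, `J(v) = R(∂₁,∂₂)v ⊗ (dx₁ ∧ dx₂)(·, v)`, and the covector kills the image vector,
hence `J(v)² = 0`.
-/

section PartialDerivative

variable {f g : Pt → ℝ} {x : Pt} (i : Fin 4)

lemma pd_const (c : ℝ) : pd i (fun _ => c) x = 0 := by simp [pd]

lemma pd_coord (j : Fin 4) : pd i (fun y => y j) x = if j = i then 1 else 0 := by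
  simp [pd, (hasFDerivAt_apply j x).fderiv, Pi.single_apply]

lemma pd_add (hf : DifferentiableAt ℝ f x) (hg : DifferentiableAt ℝ g x) :
    pd i (fun y => f y + g y) x = pd i f x + pd i g x := by
  simp [pd, fderiv_fun_add hf hg]

lemma pd_neg : pd i (fun y => -f y) x = -pd i f x := by simp [pd]

lemma pd_mul (hf : DifferentiableAt ℝ f x) (hg : DifferentiableAt ℝ g x) :
    pd i (fun y => f y * g y) x = pd i f x * g x + f x * pd i g x := by
  simp [pd, fderiv_fun_mul hf hg]; ring

lemma pd_pow (n : ℕ) (hf : DifferentiableAt ℝ f x) :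
    pd i (fun y => f y ^ n) x = n * f x ^ (n - 1) * pd i f x := by
  simp [pd, fderiv_fun_pow n hf]

end PartialDerivative

lemma Rup_swap (g : Pt → Mtx) (x : Pt) (l i j k : Fin 4) :
    Rup g x l j i k = -Rup g x l i j k := by
  unfold Rup; ring

lemma Rup_self (g : Pt → Mtx) (x : Pt) (l i k : Fin 4) : Rup g x l i i k = 0 := by
  unfold Rup; ring

lemma vecMulVec_mul_self_of_dotProduct_eq_zero {n R : Type*} [Fintype n] [CommSemiring R]
    {u w : n → R} (h : w ⬝ᵥ u = 0) : vecMulVec u w * vecMulVec u w = 0 := by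
  rw [vecMulVec_mul_vecMulVec, h, zero_smul, vecMulVec_zero]

/-- The 2-form `dx₁ ∧ dx₂`; coordinates are indexed from `0`, so `x₁ = x 0`, `x₂ = x 1`. -/
def wedge01 : Mtx := Matrix.of fun i j =>
  if i = 0 ∧ j = 1 then 1 else if i = 1 ∧ j = 0 then -1 else 0

lemma wedge01_swap (i j : Fin 4) : wedge01 j i = -wedge01 i j := by
  fin_cases i <;> fin_cases j <;> simp [wedge01]

lemma wedge01_self (i : Fin 4) : wedge01 i i = 0 := by
  linarith [wedge01_swap i i]

lemma gB1_zero_zero (a b : ℝ) : gB1 a b 0 0 = fun x =>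
    !![2*a*x 2 + 4*b*x 1^2, 2*b*x 1, a, 2*a*x 1;
       2*b*x 1, b, 0, a;
       a, 0, 0, 0;
       2*a*x 1, a, 0, 0] := by
  ext x i j
  fin_cases i <;> fin_cases j <;> simp [gB1]

section TypeB1

variable {a : ℝ} (b : ℝ) (ha : a ≠ 0) (x : Pt)

include ha in
lemma inv_gB1_zero_zero : (gB1 a b 0 0 x)⁻¹ =
    !![0, 0, 1/a, 0;
       0, 0, -2*x 1/a, 1/a;
       1/a, -2*x 1/a, -2*x 2/a, 0;
       0, 1/a, 0, -b/a^2] := by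
  apply Matrix.inv_eq_right_inv
  rw [gB1_zero_zero]
  ext i j
  fin_cases i <;> fin_cases j <;>
    simp [Matrix.mul_apply, Fin.sum_univ_four] <;> field_simp <;> ring

/-- `christoffelB1 a b y k` is the matrix `(Γᵏᵢⱼ)ᵢⱼ`. -/
def christoffelB1 (a b : ℝ) (y : Pt) : Fin 4 → Mtx := ![
  !![-1, 0, 0, 0; 0, 0, 0, 0; 0, 0, 0, 0; 0, 0, 0, 0],
  !![2*y 1, 1, 0, 0; 1, 0, 0, 0; 0, 0, 0, 0; 0, 0, 0, 0],
  !![2*y 2 + 8*b/a*y 1^2, 4*b/a*y 1, 1, 2*y 1;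
     4*b/a*y 1, 2*b/a, 0, 1;
     1, 0, 0, 0;
     2*y 1, 1, 0, 0],
  !![-(4*b/a*y 1), -(b/a), 0, -1; -(b/a), 0, 0, 0; 0, 0, 0, 0; -1, 0, 0, 0]]

/-- The matrix of `R(∂₁,∂₂)`. -/
def curvatureB1 (a b : ℝ) (x : Pt) : Mtx :=
  !![0, 0, 0, 0; 0, 0, 0, 0; 6*b/a*x 1, 3*b/a, 0, 0; -(3*b/a), 0, 0, 0]

include ha in
lemma chris_gB1 (k i j : Fin 4) : chris (gB1 a b 0 0) x k i j = christoffelB1 a b x k i j := by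
  simp only [chris, ginv, inv_gB1_zero_zero b ha]
  rw [gB1_zero_zero]
  fin_cases k <;> fin_cases i <;> fin_cases j <;>
    simp (disch := fun_prop) [Fin.sum_univ_four, christoffelB1, pd_const, pd_coord, pd_add, pd_mul,
      pd_pow] <;> field_simp <;> ring

set_option maxHeartbeats 1000000 in
include ha in
lemma Rup_gB1_of_lt (l k : Fin 4) {i j : Fin 4} (hij : i < j) :
    Rup (gB1 a b 0 0) x l i j k = wedge01 i j * curvatureB1 a b x l k := by
  simp only [Rup, chris_gB1 b ha]
  fin_cases i <;> fin_cases j <;> simp at hij <;> fin_cases l <;> fin_cases k <;>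
    simp (disch := fun_prop) [Fin.sum_univ_four, christoffelB1, wedge01, curvatureB1, pd_const,
      pd_coord, pd_add, pd_mul, pd_pow, pd_neg] <;> ring

include ha in
lemma Rup_gB1 (l i j k : Fin 4) :
    Rup (gB1 a b 0 0) x l i j k = wedge01 i j * curvatureB1 a b x l k := by
  rcases lt_trichotomy i j with hij | rfl | hji
  · exact Rup_gB1_of_lt b ha x l k hij
  · simp [Rup_self, wedge01_self]
  · rw [Rup_swap, Rup_gB1_of_lt b ha x l k hji, wedge01_swap i j]
    ring

lemma wedge01_mul_curvatureB1 : wedge01 * curvatureB1 a b x = 0 := by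
  ext i j
  fin_cases j <;> simp [Matrix.mul_apply, Fin.sum_univ_four, wedge01, curvatureB1]

include ha in
lemma gB1_mul_curvatureB1 : gB1 a b 0 0 x * curvatureB1 a b x = (3 * b) • wedge01 := by
  rw [gB1_zero_zero]
  ext i j
  fin_cases i <;> fin_cases j <;>
    simp [Matrix.mul_apply, Fin.sum_univ_four, curvatureB1, wedge01] <;> field_simp
  ring

include ha in
lemma ricci_gB1 (i j : Fin 4) : ricci (gB1 a b 0 0) x i j = 0 := by
  simp only [ricci, Rup_gB1 b ha, ← Matrix.mul_apply, wedge01_mul_curvatureB1, Matrix.zero_apply]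

include ha in
lemma scal_gB1 : scal (gB1 a b 0 0) x = 0 := by
  simp [scal, ricci_gB1 b ha]

include ha in
lemma Riem_gB1 (i j k l : Fin 4) :
    Riem (gB1 a b 0 0) x i j k l = -3 * b * (wedge01 i j * wedge01 k l) := by
  have h := congr_fun₂ (gB1_mul_curvatureB1 b ha x) l k
  simp only [Matrix.mul_apply, Matrix.smul_apply, smul_eq_mul] at h
  simp only [Riem, Rup_gB1 b ha, mul_left_comm _ (wedge01 i j), ← Finset.mul_sum, h,
    wedge01_swap k l]
  ring

include ha in
lemma weyl_gB1 (i j k l : Fin 4) :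
    weyl (gB1 a b 0 0) x i j k l = -3 * b * (wedge01 i j * wedge01 k l) := by
  simp [weyl, ricci_gB1 b ha, scal_gB1 b ha, Riem_gB1 b ha]

include ha in
lemma jacobi_gB1 (v : Fin 4 → ℝ) :
    jacobi (gB1 a b 0 0) x v = vecMulVec (curvatureB1 a b x *ᵥ v) (wedge01 *ᵥ v) := by
  ext l i
  simp only [jacobi, Matrix.of_apply, Rup_gB1 b ha, vecMulVec_apply, mulVec, dotProduct,
    Finset.sum_mul_sum]
  rw [Finset.sum_comm]
  exact Finset.sum_congr rfl fun _ _ => Finset.sum_congr rfl fun _ _ => by ring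

lemma wedge01_mulVec_dotProduct_curvatureB1_mulVec (v : Fin 4 → ℝ) :
    (wedge01 *ᵥ v) ⬝ᵥ (curvatureB1 a b x *ᵥ v) = 0 := by
  simp [dotProduct, mulVec, Fin.sum_univ_four, wedge01, curvatureB1]

end TypeB1

/-- the Type (B.1) metric with q = c = 0 is Ricci flat,
its only non-zero Weyl component (up to symmetries) is W₁₂₁₂ = −3b,
it is flat iff b = 0, and for b ≠ 0 all Jacobi operators are two-step
nilpotent. -/
theorem typeB1_qc0 (a b : ℝ) (h : a ≠ 0) :
    (∀ (x : Pt) (i j : Fin 4), ricci (gB1 a b 0 0) x i j = 0) ∧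
    (∀ (x : Pt) (i j k l : Fin 4), weyl (gB1 a b 0 0) x i j k l =
      (-3*b) * ((if i = 0 ∧ j = 1 then (1:ℝ) else if i = 1 ∧ j = 0 then -1 else 0)
        * (if k = 0 ∧ l = 1 then (1:ℝ) else if k = 1 ∧ l = 0 then -1 else 0))) ∧
    ((∀ (x : Pt) (i j k l : Fin 4), Riem (gB1 a b 0 0) x i j k l = 0) ↔ b = 0) ∧
    (b ≠ 0 → ∀ (x : Pt) (v : Fin 4 → ℝ),
      jacobi (gB1 a b 0 0) x v * jacobi (gB1 a b 0 0) x v = 0) := by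
  refine ⟨ricci_gB1 b h, weyl_gB1 b h, ⟨fun hflat => ?_, fun hb x i j k l => ?_⟩, fun _ x v => ?_⟩
  · have h0101 := Riem_gB1 b h 0 0 1 0 1
    norm_num [hflat, wedge01] at h0101
    linarith
  · rw [Riem_gB1 b h, hb]
    ring
  · rw [jacobi_gB1 b h]
    exact vecMulVec_mul_self_of_dotProduct_eq_zero
      (wedge01_mulVec_dotProduct_curvatureB1_mulVec b x v)
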